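/- A streak has at most one multiplicative structure: if ·' and ·'' are two total multiplications each making the streak X into a multiplicative prestreak (with respect to the same underlying streak structure), then a ·' b = a ·'' b for all a, b ∈ X. -/

import Mathlib

/-- A prestreak: a strict order (asymmetric and cotransitive) together with a
commutative additive monoid structure and a commutative multiplicative monoid
structure on the positive part, compatible with the order.  (The intrinsic
topology conditions of the paper are omitted, being vacuous in the classical
set-theoretic setting.) -/
structure Prestreak (X : Type*) where
  lt : X → X → Prop
  add : X → X → X
  zero : X
  mul : X → X → X
  one : X
  lt_asymm : ∀ a b, ¬ (lt a b ∧ lt b a)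
  lt_cotrans : ∀ a b x, lt a b → lt a x ∨ lt x b
  add_comm : ∀ a b, add a b = add b a
  add_assoc : ∀ a b c, add (add a b) c = add a (add b c)
  add_zero : ∀ a, add a zero = a
  zero_lt_one : lt zero one
  mul_pos : ∀ a b, lt zero a → lt zero b → lt zero (mul a b)
  mul_comm : ∀ a b, lt zero a → lt zero b → mul a b = mul b a
  mul_assoc : ∀ a b c, lt zero a → lt zero b → lt zero c →
    mul (mul a b) c = mul a (mul b c)
  mul_one : ∀ a, lt zero a → mul a one = a
  mul_add : ∀ a b c, lt zero a → lt zero b → lt zero c →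
    mul (add a b) c = add (mul a c) (mul b c)
  add_lt_add_iff : ∀ a b x, (lt (add a x) (add b x) ↔ lt a b)
  mul_lt_mul_iff : ∀ a b x, lt zero a → lt zero b → lt zero x →
    (lt (mul a x) (mul b x) ↔ lt a b)

namespace Prestreak

variable {X : Type*}

/-- Multiplication by a natural number: `0·a = 0`, `(n+1)·a = n·a + a`. -/
def nsmul (P : Prestreak X) : ℕ → X → X
  | 0, _ => P.zero
  | n + 1, a => P.add (nsmul P n a) a

/-- The canonical image of a natural number, `n ↦ n·1`. -/
def ofNat (P : Prestreak X) (n : ℕ) : X := P.nsmul n P.one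

/-- Comparison `x < q` of an element of a prestreak with a rational number,
using the canonical representation `q = (q.num⁺ − q.num⁻)/q.den`:
`x < (a−b)/c  :=  c·x + b < a`. -/
def ltQ (P : Prestreak X) (x : X) (q : ℚ) : Prop :=
  P.lt (P.add (P.nsmul q.den x) (P.ofNat ((-q.num).toNat))) (P.ofNat q.num.toNat)

/-- Comparison `q < x` of a rational with an element of a prestreak:
`(a−b)/c < x  :=  a < c·x + b`. -/
def qLt (P : Prestreak X) (q : ℚ) (x : X) : Prop :=
  P.lt (P.ofNat q.num.toNat) (P.add (P.nsmul q.den x) (P.ofNat ((-q.num).toNat)))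

/-- The archimedean property for prestreaks. -/
def Archimedean (P : Prestreak X) : Prop :=
  ∀ a b c d : X, P.lt b d →
    ∃ n : ℕ, P.lt (P.add a (P.nsmul n b)) (P.add c (P.nsmul n d))

/-- Tightness: antisymmetry of `≤` (where `a ≤ b := ¬ b < a`).
A streak is a tight archimedean prestreak. -/
def Tight (P : Prestreak X) : Prop :=
  ∀ a b : X, ¬ P.lt a b → ¬ P.lt b a → a = b

/-- The apartness relation `a # b := a < b ∨ b < a`. -/
def Apart (P : Prestreak X) (a b : X) : Prop := P.lt a b ∨ P.lt b a

/-- A morphism of prestreaks: preserves `<`, `+`, `0`, `1` and products of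
positive elements. -/
def IsHom {Y : Type*} (P : Prestreak X) (Q : Prestreak Y) (f : X → Y) : Prop :=
  (∀ a b, P.lt a b → Q.lt (f a) (f b)) ∧
  (∀ a b, f (P.add a b) = Q.add (f a) (f b)) ∧
  f P.zero = Q.zero ∧ f P.one = Q.one ∧
  (∀ a b, P.lt P.zero a → P.lt P.zero b → f (P.mul a b) = Q.mul (f a) (f b))

/-- A multiplicative structure on a prestreak: a total multiplication which is
commutative, associative, distributes over addition, has unit `1`, restricts to
the given multiplication on positive elements, and satisfies the multiplicity
condition. -/
def IsMultiplicative (P : Prestreak X) (tmul : X → X → X) : Prop :=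
  (∀ a b, tmul a b = tmul b a) ∧
  (∀ a b c, tmul (tmul a b) c = tmul a (tmul b c)) ∧
  (∀ a b c, tmul (P.add a b) c = P.add (tmul a c) (tmul b c)) ∧
  (∀ a, tmul a P.one = a) ∧
  (∀ a b, P.lt P.zero a → P.lt P.zero b → tmul a b = P.mul a b) ∧
  (∀ a b c d, P.lt b a → P.lt d c →
    P.lt (P.add (tmul a d) (tmul b c)) (P.add (tmul a c) (tmul b d)))

end Prestreak


/-!
By the archimedean property, adding large enough natural numbers `n` and `k` to `a` and `b` makes
both factors positive, where every multiplicative structure agrees with the multiplication of the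
prestreak. Distributivity and `a · k = k • a` write `(a + n) · (b + k)` as `a · b` plus a term
that does not depend on the multiplicative structure, and tightness makes addition cancellative.
-/

namespace Prestreak

variable {X : Type*} {P : Prestreak X}

lemma lt_irrefl (a : X) : ¬ P.lt a a := fun h => P.lt_asymm a a ⟨h, h⟩

lemma zero_add (a : X) : P.add P.zero a = a := by
  rw [P.add_comm]
  exact P.add_zero a

lemma nsmul_zero (n : ℕ) : P.nsmul n P.zero = P.zero := by
  induction n with
  | zero => rfl
  | succ n ih => rw [nsmul, ih, P.add_zero]

lemma Tight.add_right_cancel (hT : P.Tight) {u v c : X} (h : P.add u c = P.add v c) :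
    u = v :=
  hT u v (fun huv => lt_irrefl (P := P) _ (h ▸ (P.add_lt_add_iff u v c).mpr huv))
    (fun hvu => lt_irrefl (P := P) _ (h ▸ (P.add_lt_add_iff v u c).mpr hvu))

lemma Archimedean.exists_pos_add_ofNat (hA : P.Archimedean) (a : X) :
    ∃ n, P.lt P.zero (P.add a (P.ofNat n)) := by
  obtain ⟨n, hn⟩ := hA P.zero P.zero a P.one P.zero_lt_one
  rw [nsmul_zero, P.add_zero] at hn
  exact ⟨n, hn⟩

namespace IsMultiplicative

variable {t : X → X → X}

lemma mul_zero (hT : P.Tight) (h : P.IsMultiplicative t) (a : X) : t a P.zero = P.zero := by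
  obtain ⟨comm, -, add_mul, -⟩ := h
  have double : P.add (t P.zero a) (t P.zero a) = P.add P.zero (t P.zero a) := by
    rw [← add_mul, P.add_zero, zero_add]
  rw [comm, hT.add_right_cancel double]

lemma mul_ofNat (hT : P.Tight) (h : P.IsMultiplicative t) (a : X) (n : ℕ) :
    t a (P.ofNat n) = P.nsmul n a := by
  induction n with
  | zero => exact h.mul_zero hT a
  | succ n ih =>
    obtain ⟨comm, -, add_mul, mul_one, -⟩ := h
    change t a (P.add (P.ofNat n) P.one) = P.add (P.nsmul n a) a
    rw [comm, add_mul, comm, ih, comm, mul_one]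

lemma add_ofNat_mul_add_ofNat (hT : P.Tight) (h : P.IsMultiplicative t) (a b : X) (n k : ℕ) :
    t (P.add a (P.ofNat n)) (P.add b (P.ofNat k)) =
      P.add (t a b) (P.add (P.nsmul k a) (P.nsmul n (P.add b (P.ofNat k)))) := by
  have mul_ofNat := h.mul_ofNat hT
  obtain ⟨comm, -, add_mul, -⟩ := h
  rw [add_mul, comm a, add_mul, comm b, comm (P.ofNat k), comm (P.ofNat n), mul_ofNat,
    mul_ofNat, P.add_assoc]

end IsMultiplicative

end Prestreak

/-- A streak has at most one multiplicative structure. -/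
theorem multiplicative_structure_unique {X : Type*} (P : Prestreak X)
    (hA : P.Archimedean) (hT : P.Tight)
    (m m' : X → X → X)
    (hm : P.IsMultiplicative m) (hm' : P.IsMultiplicative m') :
    ∀ a b : X, m a b = m' a b := by
  intro a b
  obtain ⟨n, hn⟩ := hA.exists_pos_add_ofNat a
  obtain ⟨k, hk⟩ := hA.exists_pos_add_ofNat b
  have shifted : m (P.add a (P.ofNat n)) (P.add b (P.ofNat k)) =
      m' (P.add a (P.ofNat n)) (P.add b (P.ofNat k)) := by
    rw [hm.2.2.2.2.1 _ _ hn hk, hm'.2.2.2.2.1 _ _ hn hk]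
  rw [hm.add_ofNat_mul_add_ofNat hT, hm'.add_ofNat_mul_add_ofNat hT] at shifted
  exact hT.add_right_cancel shifted
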